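/- Let a = Σᵢ aᵢ(z)λⁱ ∈ ℂ((z))[[λ]] satisfy a(z,0) ∈ ℂ[[z]]. Let Y be the set of all r ∈ ℂ((z))[[λ]] such that (i) r(z,0) ∈ ℂ[[z]] is a unit of ℂ[[z]], and (ii) a' := a + λ·r⁻¹·(dr/dz) satisfies z·a' ∈ ℂ[[z,λ]] and res_{z=0} a' = −λ/2. Then: (1) any two elements of Y differ by multiplication by a unit of ℂ[[z,λ]], so Y is either empty or a single orbit under the multiplicative action of the units of ℂ[[z,λ]]; (2) Y is nonempty if and only if z·a₁(z) ∈ ℂ[[z]] and res_{z=0} a = −λ/2, where a₁ is the coefficient of λ in a. -/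

import Mathlib

open PowerSeries

noncomputable section

/-- `K = ℂ((z))`, the field of formal Laurent series. -/
abbrev K : Type := LaurentSeries ℂ

/-- The formal derivative `d/dz` on Laurent series. -/
def lD (f : K) : K where
  coeff n := ((n : ℂ) + 1) * f.coeff (n + 1)
  isPWO_support' := by
    apply Set.IsPWO.mono ((f.isPWO_support).image_of_monotone
      (f := fun m : ℤ => m - 1) (fun a b hab => by simpa using hab))
    intro n hn
    refine ⟨n + 1, ?_, by ring⟩
    intro h0
    apply hn
    simp [h0]

/-- `ℂ[[z]]` viewed as a subring of `ℂ((z))`. -/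
def Oz : Subring K := (HahnSeries.ofPowerSeries ℤ ℂ).range

/-- `h ∈ ℂ[[z]]` has a simple zero at `z = 0`. -/
def SimpleZero (h : PowerSeries ℂ) : Prop :=
  PowerSeries.coeff (R := ℂ) 0 h = 0 ∧ PowerSeries.coeff (R := ℂ) 1 h ≠ 0

/-- `K̂ = ℂ((z))[[λ]]`, formal power series in `λ` with Laurent series coefficients. -/
abbrev Khat : Type := PowerSeries K

/-- The `λ`-coefficientwise formal derivative `d/dz` on `ℂ((z))[[λ]]`. -/
def pD (F : Khat) : Khat := PowerSeries.mk fun i => lD (PowerSeries.coeff (R := K) i F)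

/-- `F ∈ ℂ[[z,λ]]`: every `λ`-coefficient of `F` lies in `ℂ[[z]]`. -/
def MemOhat (F : Khat) : Prop := ∀ i, PowerSeries.coeff (R := K) i F ∈ Oz

/-- The `λ`-gauge transform `Gauge_λ(A,R) = R⁻¹AR + λ·R⁻¹·(dR/dz)`. -/
def lamGauge (A R : Matrix (Fin 2) (Fin 2) Khat) : Matrix (Fin 2) (Fin 2) Khat :=
  R⁻¹ * A * R + (PowerSeries.X : Khat) • (R⁻¹ * R.map pD)

/-- The constant term in `λ`: `F(z,0)`. -/
def ev0 : Khat →+* K := PowerSeries.constantCoeff (R := K)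

/-- The residue of a Laurent series: the coefficient of `z⁻¹`. -/
def res (f : K) : ℂ := f.coeff (-1)

/-- The residue of an element of `ℂ((z))[[λ]]`, an element of `ℂ[[λ]]`. -/
def resHat (F : Khat) : PowerSeries ℂ := PowerSeries.mk fun i => res (PowerSeries.coeff (R := K) i F)

/-- The Laurent series `z`. -/
def zK : K := HahnSeries.ofPowerSeries ℤ ℂ PowerSeries.X

/-- `-λ/2` as an element of `ℂ[[λ]]`. -/
def negHalfLam : PowerSeries ℂ := -(PowerSeries.C (R := ℂ) (1 / 2) * PowerSeries.X)


/-!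
Write `ℓ(r) = r⁻¹ · dr/dz`.

(1) For `r, r' ∈ Y` the difference `w = ℓ(r') - ℓ(r)` satisfies `z λ w ∈ ℂ[[z,λ]]` and
`res (λ w) = 0`, hence `w ∈ ℂ[[z,λ]]`. The quotient `u = r' / r` solves `du/dz = u w`; if a
`λ`-coefficient of `u` had a pole, differentiating would raise its order while multiplying by `w`
would not, so inductively in the `λ`-degree `u ∈ ℂ[[z,λ]]`, and likewise `r / r'`.

(2) If `r(z,0)` is a unit of `ℂ[[z]]`, then `ℓ(r(z,0)) ∈ ℂ[[z]]` and
`ℓ(r) - ℓ(r(z,0)) = d/dz log (r / r(z,0))` has zero residue, so both conditions are necessary.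
Conversely, the part of order `≤ -2` of each `a_{i+1}` is a derivative `dTᵢ/dz`, and
`r = exp (-Σ Tᵢ λⁱ)` removes it. Logarithm and exponential are substitutions into formal power
series, differentiated by a chain rule for the coefficientwise derivation `d/dz`.
-/

section CoefficientwiseDerivation

variable {R A : Type*} [CommRing R] [CommRing A] [Algebra R A]

namespace PowerSeries

lemma coeff_subst_trunc {f : R⟦X⟧} {T : A⟦X⟧} (hT : constantCoeff T = 0) {i N : ℕ}
    (hi : i < N) : coeff i ((trunc N f : R⟦X⟧).subst T) = coeff i (f.subst T) := by
  have hsub := HasSubst.of_constantCoeff_zero' hT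
  obtain ⟨g, hg⟩ : X ^ N ∣ f - (trunc N f : R⟦X⟧) :=
    X_pow_dvd_iff.2 fun m hm => by simp [coeff_trunc, hm]
  have hdvd : X ^ N ∣ f.subst T - (trunc N f : R⟦X⟧).subst T := by
    rw [← subst_sub hsub, hg, subst_mul hsub, subst_pow hsub, subst_X hsub]
    exact (pow_dvd_pow_of_dvd (X_dvd_iff.2 hT) N).mul_right _
  have := X_pow_dvd_iff.1 hdvd i hi
  rwa [map_sub, sub_eq_zero, eq_comm] at this

lemma one_add_X_mul_derivative_log [Algebra ℚ R] : (1 + X) * d⁄dX R (log R) = 1 := by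
  ext n
  rw [deriv_log, add_mul, one_mul, map_add]
  cases n with
  | zero => simp
  | succ n => simp [coeff_succ_X_mul, pow_succ]

end PowerSeries

namespace Derivation

def mapPowerSeries (δ : Derivation R A A) : Derivation R A⟦X⟧ A⟦X⟧ :=
  Derivation.mk'
    { toFun := fun F => PowerSeries.mk fun n => δ (coeff n F)
      map_add' := fun F G => by ext n; simp only [coeff_mk, map_add]
      map_smul' := fun c F => by
        ext n
        simp only [coeff_mk, coeff_smul, map_smul, RingHom.id_apply] }
    fun F G => by
      ext n
      rw [smul_eq_mul, smul_eq_mul, mul_comm G]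
      simp only [LinearMap.coe_mk, AddHom.coe_mk, map_add, coeff_mul, coeff_mk, map_sum,
        ← Finset.sum_add_distrib, δ.leibniz, smul_eq_mul, mul_comm (coeff _ G)]

@[simp]
lemma coeff_mapPowerSeries (δ : Derivation R A A) (F : A⟦X⟧) (n : ℕ) :
    coeff n (δ.mapPowerSeries F) = δ (coeff n F) :=
  show coeff n (PowerSeries.mk fun n => δ (coeff n F)) = _ from coeff_mk _ _

theorem mapPowerSeries_subst (δ : Derivation R A A) (f : R⟦X⟧) {T : A⟦X⟧}
    (hT : constantCoeff T = 0) :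
    δ.mapPowerSeries (f.subst T) = (d⁄dX R f).subst T * δ.mapPowerSeries T := by
  have hsub := HasSubst.of_constantCoeff_zero' hT
  ext n
  have hpoly : δ.mapPowerSeries ((trunc (n + 2) f : R⟦X⟧).subst T) =
      (trunc (n + 1) (d⁄dX R f) : R⟦X⟧).subst T * δ.mapPowerSeries T := by
    rw [subst_coe hsub, subst_coe hsub, trunc_derivative, comp_aeval_eq, smul_eq_mul]
  calc coeff n (δ.mapPowerSeries (f.subst T))
      = coeff n (δ.mapPowerSeries ((trunc (n + 2) f : R⟦X⟧).subst T)) := by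
        rw [coeff_mapPowerSeries, coeff_mapPowerSeries, coeff_subst_trunc hT (by omega)]
    _ = coeff n ((d⁄dX R f).subst T * δ.mapPowerSeries T) := by
        rw [hpoly, coeff_mul, coeff_mul]
        refine Finset.sum_congr rfl fun p hp => ?_
        rw [coeff_subst_trunc hT
          (Nat.lt_succ_of_le (Finset.HasAntidiagonal.antidiagonal.fst_le hp))]

variable [Algebra ℚ R]

theorem exists_mapPowerSeries_eq_mul (δ : Derivation R A A) {T : A⟦X⟧}
    (hT : constantCoeff T = 0) :
    ∃ E : A⟦X⟧, constantCoeff E = 1 ∧ δ.mapPowerSeries E = E * δ.mapPowerSeries T := by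
  have hsub := HasSubst.of_constantCoeff_zero' hT
  refine ⟨(exp R).subst T, ?_, by rw [mapPowerSeries_subst δ _ hT, derivative_exp]⟩
  have h := constantCoeff_subst_eq_zero hT (exp R - 1) (by simp [constantCoeff_exp])
  rw [subst_sub hsub, ← coe_substAlgHom hsub, map_one, map_sub, sub_eq_zero] at h
  rwa [coe_substAlgHom, ← constantCoeff_eq] at h

theorem exists_mul_mapPowerSeries_eq (δ : Derivation R A A) {U : A⟦X⟧}
    (hU : constantCoeff U = 1) :
    ∃ L : A⟦X⟧, U * δ.mapPowerSeries L = δ.mapPowerSeries U := by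
  have hV : constantCoeff (U - 1) = 0 := by simp [hU]
  have hsub := HasSubst.of_constantCoeff_zero' hV
  have hinv : U * (d⁄dX R (log R)).subst (U - 1) = 1 := by
    have h := congrArg (substAlgHom hsub) (one_add_X_mul_derivative_log (R := R))
    rwa [map_mul, map_add, map_one, substAlgHom_X, coe_substAlgHom, add_sub_cancel] at h
  refine ⟨(log R).subst (U - 1), ?_⟩
  rw [mapPowerSeries_subst δ _ hV, map_sub, map_one_eq_zero, sub_zero, ← mul_assoc, hinv,
    one_mul]

end Derivation

end CoefficientwiseDerivation

-- The default `ℂ`-algebra structure on `ℂ((z))` factors through `ℂ[[z]]`; its scalar action is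
-- only propositionally equal to the coefficientwise `Module ℂ K`, so `Derivation ℂ K K` would
-- act differently on its domain and codomain.
attribute [local instance 1100] HahnSeries.instAlgebra

section LaurentSeries

open HahnSeries

lemma coeff_lD (f : K) (n : ℤ) : (lD f).coeff n = ((n : ℂ) + 1) * f.coeff (n + 1) := rfl

lemma lD_single (a : ℤ) (c : ℂ) : lD (single a c) = single (a - 1) (a * c) := by
  ext n
  rw [coeff_lD, coeff_single, coeff_single]
  by_cases h : n = a - 1
  · subst h
    simp
  · rw [if_neg (by omega), if_neg h, mul_zero]

lemma lD_ofPowerSeries (F : ℂ⟦X⟧) :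
    lD (ofPowerSeries ℤ ℂ F) = ofPowerSeries ℤ ℂ (d⁄dX ℂ F) := by
  ext n
  rw [coeff_lD, PowerSeries.coeff_coe, PowerSeries.coeff_coe]
  rcases lt_or_ge n 0 with hn | hn
  · rcases eq_or_ne n (-1) with rfl | hn'
    · simp
    · rw [if_pos (by omega), if_pos hn, mul_zero]
  · lift n to ℕ using hn
    rw [if_neg (by omega), if_neg (by omega), coeff_derivative, mul_comm]
    norm_cast

lemma lD_single_mul (a : ℤ) (c : ℂ) (f : K) :
    lD (single a c * f) = lD (single a c) * f + single a c * lD f := by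
  ext n
  rw [lD_single, HahnSeries.coeff_add, coeff_lD, coeff_single_mul, coeff_single_mul,
    coeff_single_mul, coeff_lD, show n - (a - 1) = n + 1 - a by ring,
    show n - a + 1 = n + 1 - a by ring]
  push_cast
  ring

lemma lD_mul (f g : K) : lD (f * g) = f * lD g + lD f * g := by
  have hPS : ∀ F G : ℂ⟦X⟧, lD (ofPowerSeries ℤ ℂ F * ofPowerSeries ℤ ℂ G) =
      ofPowerSeries ℤ ℂ F * lD (ofPowerSeries ℤ ℂ G) +
        lD (ofPowerSeries ℤ ℂ F) * ofPowerSeries ℤ ℂ G := by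
    intro F G
    rw [← map_mul, lD_ofPowerSeries, lD_ofPowerSeries, lD_ofPowerSeries, Derivation.leibniz,
      smul_eq_mul, smul_eq_mul, map_add, map_mul, map_mul]
    ring
  rw [← LaurentSeries.single_order_mul_powerSeriesPart f,
    ← LaurentSeries.single_order_mul_powerSeriesPart g,
    show ∀ s t F G : K, s * F * (t * G) = s * (t * (F * G)) by intros; ring]
  simp only [lD_single_mul, hPS]
  ring

def lDer : Derivation ℂ K K where
  toFun := lD
  map_add' f g := by ext n; simp only [coeff_lD, HahnSeries.coeff_add]; ring
  map_smul' c f := by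
    ext n
    simp only [coeff_lD, HahnSeries.coeff_smul, smul_eq_mul, RingHom.id_apply]
    ring
  map_one_eq_zero' := by
    change lD 1 = 0
    rw [← single_zero_one, lD_single]
    simp
  leibniz' f g := by
    change lD (f * g) = f * lD g + g * lD f
    rw [lD_mul, mul_comm g]

lemma lDer_apply (f : K) : lDer f = lD f := rfl

lemma mem_Oz_iff {f : K} : f ∈ Oz ↔ ∀ n < 0, f.coeff n = 0 := by
  constructor
  · rintro ⟨F, rfl⟩ n hn
    rw [PowerSeries.coeff_coe, if_pos hn]
  · intro h
    refine ⟨PowerSeries.mk fun m => f.coeff m, ?_⟩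
    ext n
    rw [PowerSeries.coeff_coe]
    split_ifs with hn
    · exact (h n hn).symm
    · rw [coeff_mk, Int.natAbs_of_nonneg (not_lt.1 hn)]

lemma mem_Oz_iff_zero_le_orderTop {f : K} : f ∈ Oz ↔ 0 ≤ f.orderTop := by
  rw [mem_Oz_iff, le_orderTop_iff_forall]
  exact forall_congr' fun n => by norm_cast

lemma res_eq_zero_of_mem_Oz {f : K} (hf : f ∈ Oz) : res f = 0 :=
  mem_Oz_iff.1 hf (-1) (by norm_num)

lemma zK_mem_Oz : zK ∈ Oz := ⟨X, rfl⟩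

lemma coeff_zK_mul (f : K) (n : ℤ) : (zK * f).coeff n = f.coeff (n - 1) := by
  rw [zK, ofPowerSeries_X, coeff_single_mul, one_mul]

lemma mem_Oz_of_zK_mul_mem {f : K} (hz : zK * f ∈ Oz) (hres : res f = 0) : f ∈ Oz := by
  refine mem_Oz_iff.2 fun n hn => ?_
  rcases eq_or_lt_of_le (show n ≤ -1 by omega) with rfl | hn'
  · exact hres
  · simpa [coeff_zK_mul] using mem_Oz_iff.1 hz (n + 1) (by omega)

-- A pole of order `k` of `f` gives `lD f` a pole of order `k + 1`, which `f * w` cannot cancel.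
lemma mem_Oz_of_lD_sub_mul_mem {f w : K} (hw : w ∈ Oz) (h : lD f - f * w ∈ Oz) : f ∈ Oz := by
  rw [mem_Oz_iff_zero_le_orderTop] at hw ⊢
  by_contra hf
  obtain ⟨m, hm⟩ := WithTop.ne_top_iff_exists.1 (ne_top_of_lt (not_le.1 hf))
  have hm0 : m < 0 := by rw [← hm] at hf; exact_mod_cast not_le.1 hf
  have hfw : (f * w).coeff (m - 1) = 0 := by
    apply coeff_eq_zero_of_lt_orderTop
    rw [orderTop_mul, ← hm]
    calc ((m - 1 : ℤ) : WithTop ℤ) < m := by exact_mod_cast sub_one_lt m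
      _ ≤ m + w.orderTop := le_add_of_nonneg_right hw
  have hcoeff := mem_Oz_iff.1 h (m - 1) (by omega)
  rw [HahnSeries.coeff_sub, hfw, sub_zero, coeff_lD, sub_add_cancel] at hcoeff
  have hm' : ((m - 1 : ℤ) : ℂ) + 1 ≠ 0 := by
    push_cast
    simpa using hm0.ne
  exact mul_ne_zero hm' (coeff_orderTop_ne hm.symm) hcoeff

-- A primitive of the part of `f` of order `≤ -2`.
def polarPrimitive (f : K) : K :=
  ofSuppBddBelow (fun n => if n < 0 then f.coeff (n - 1) / n else 0) ⟨f.order + 1, fun n hn => by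
    by_contra h
    apply hn
    dsimp only
    rw [coeff_eq_zero_of_lt_order (by omega : n - 1 < f.order), zero_div, ite_self]⟩

lemma coeff_polarPrimitive (f : K) (n : ℤ) :
    (polarPrimitive f).coeff n = if n < 0 then f.coeff (n - 1) / n else 0 := rfl

lemma zK_mul_sub_lD_polarPrimitive_mem (f : K) : zK * (f - lD (polarPrimitive f)) ∈ Oz := by
  refine mem_Oz_iff.2 fun n hn => ?_
  rw [coeff_zK_mul, HahnSeries.coeff_sub, coeff_lD, sub_add_cancel, coeff_polarPrimitive,
    if_pos hn]
  have hn' : (n : ℂ) ≠ 0 := by exact_mod_cast hn.ne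
  push_cast
  field_simp
  ring

lemma polarPrimitive_eq_zero {f : K} (h : zK * f ∈ Oz) : polarPrimitive f = 0 := by
  ext n
  rw [coeff_polarPrimitive]
  split_ifs with hn
  · rw [← coeff_zK_mul, mem_Oz_iff.1 h n hn, zero_div, HahnSeries.coeff_zero]
  · rw [HahnSeries.coeff_zero]

lemma inv_mul_lD_ofPowerSeries_mem_Oz {g : ℂ⟦X⟧} (hg : IsUnit g) :
    (ofPowerSeries ℤ ℂ g)⁻¹ * lD (ofPowerSeries ℤ ℂ g) ∈ Oz := by
  obtain ⟨u, rfl⟩ := hg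
  have hinv : (ofPowerSeries ℤ ℂ u)⁻¹ = ofPowerSeries ℤ ℂ ↑u⁻¹ :=
    inv_eq_of_mul_eq_one_right (by rw [← map_mul, Units.mul_inv, map_one])
  rw [hinv, lD_ofPowerSeries, ← map_mul]
  exact ⟨_, rfl⟩

end LaurentSeries

section LambdaSeries

lemma pD_eq_mapPowerSeries (F : Khat) : pD F = lDer.mapPowerSeries F := rfl

lemma coeff_pD (F : Khat) (i : ℕ) : coeff i (pD F) = lD (coeff i F) := coeff_mk _ _

lemma pD_mul (F G : Khat) : pD (F * G) = F * pD G + pD F * G := by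
  simp only [pD_eq_mapPowerSeries, Derivation.leibniz, smul_eq_mul]
  ring

lemma pD_C (c : K) : pD (C c) = C (lD c) := by
  ext i
  rw [coeff_pD, coeff_C, coeff_C]
  split_ifs
  · rfl
  · rw [← lDer_apply, map_zero]

lemma pD_mul_inv {r r' : Khat} (hr : constantCoeff r ≠ 0) (hr' : constantCoeff r' ≠ 0) :
    pD (r' * r⁻¹) = r' * r⁻¹ * (r'⁻¹ * pD r' - r⁻¹ * pD r) := by
  have hinv : pD r⁻¹ = -r⁻¹ ^ 2 * pD r := by
    simpa only [pD_eq_mapPowerSeries, smul_eq_mul] using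
      lDer.mapPowerSeries.leibniz_of_mul_eq_one (PowerSeries.inv_mul_cancel r hr)
  rw [pD_mul, hinv]
  linear_combination (-(r⁻¹ * pD r')) * PowerSeries.mul_inv_cancel r' hr'

lemma constantCoeff_inv_mul_pD (r : Khat) :
    constantCoeff (r⁻¹ * pD r) = (constantCoeff r)⁻¹ * lD (constantCoeff r) := by
  rw [map_mul, constantCoeff_inv, ← coeff_zero_eq_constantCoeff_apply (pD r), coeff_pD,
    coeff_zero_eq_constantCoeff_apply]

-- `r = c · U` with `U(z,0) = 1`, and `U⁻¹ · dU/dz = d/dz log U`.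
lemma exists_inv_mul_pD_eq {r : Khat} (hr : constantCoeff r ≠ 0) :
    ∃ L : Khat, r⁻¹ * pD r = C ((constantCoeff r)⁻¹ * lD (constantCoeff r)) + pD L := by
  set c := constantCoeff r
  obtain ⟨U, hU⟩ : ∃ U, C c⁻¹ * r = U := ⟨_, rfl⟩
  obtain ⟨L, hL⟩ := lDer.exists_mul_mapPowerSeries_eq (U := U)
    (by simp [← hU, c, inv_mul_cancel₀ hr])
  have hcc : C c * C c⁻¹ = 1 := by rw [← map_mul, mul_inv_cancel₀ hr, map_one]
  have hr' : r = C c * U := by rw [← hU, ← mul_assoc, hcc, one_mul]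
  have key : pD r = r * (C (c⁻¹ * lD c) + pD L) := by
    rw [hr', pD_mul, pD_C, pD_eq_mapPowerSeries U, ← hL, map_mul, ← pD_eq_mapPowerSeries]
    linear_combination (-(C (lD c) * U)) * hcc
  refine ⟨L, ?_⟩
  rw [key, ← mul_assoc, PowerSeries.inv_mul_cancel r hr, one_mul]

lemma coeff_resHat (F : Khat) (i : ℕ) : coeff i (resHat F) = res (coeff i F) := coeff_mk _ _

lemma resHat_add (F G : Khat) : resHat (F + G) = resHat F + resHat G := by
  ext i
  simp [coeff_resHat, res]

lemma resHat_sub (F G : Khat) : resHat (F - G) = resHat F - resHat G := by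
  ext i
  simp [coeff_resHat, res]

lemma resHat_X_mul (F : Khat) : resHat (X * F) = X * resHat F := by
  ext (_ | i) <;> simp [coeff_resHat, res, coeff_succ_X_mul]

lemma resHat_C (c : K) : resHat (C c) = C (res c) := by
  ext i
  simp only [coeff_resHat, coeff_C]
  split_ifs <;> simp [res]

lemma resHat_pD (F : Khat) : resHat (pD F) = 0 := by
  ext i
  simp [coeff_resHat, coeff_pD, res, coeff_lD]

lemma resHat_inv_mul_pD_eq_zero {r : Khat} {g : ℂ⟦X⟧}
    (hr : constantCoeff r = HahnSeries.ofPowerSeries ℤ ℂ g) (hg : IsUnit g) :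
    resHat (r⁻¹ * pD r) = 0 := by
  obtain ⟨L, hL⟩ := exists_inv_mul_pD_eq
    (hr ▸ (map_ne_zero_iff _ HahnSeries.ofPowerSeries_injective).2 hg.ne_zero)
  rw [hL, resHat_add, resHat_C, resHat_pD, hr,
    res_eq_zero_of_mem_Oz (inv_mul_lD_ofPowerSeries_mem_Oz hg), map_zero, add_zero]

lemma MemOhat.sub {F G : Khat} (hF : MemOhat F) (hG : MemOhat G) : MemOhat (F - G) := fun i => by
  rw [map_sub]
  exact sub_mem (hF i) (hG i)

lemma memOhat_of_X_mul {w : Khat} (hz : MemOhat (C zK * (X * w))) (hres : resHat (X * w) = 0) :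
    MemOhat w := fun i =>
  mem_Oz_of_zK_mul_mem (by simpa only [coeff_C_mul, coeff_succ_X_mul] using hz (i + 1))
    (by simpa only [coeff_resHat, coeff_succ_X_mul, map_zero] using congrArg (coeff (i + 1)) hres)

lemma memOhat_of_pD_eq_mul {u w : Khat} (hw : MemOhat w) (h : pD u = u * w) : MemOhat u := by
  intro i
  induction i using Nat.strong_induction_on with
  | _ i ih =>
    apply mem_Oz_of_lD_sub_mul_mem (hw 0)
    have hi : lD (coeff i u) = ∑ j ∈ Finset.range (i + 1), coeff j u * coeff (i - j) w := by
      rw [← coeff_pD, h, coeff_mul,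
        Finset.Nat.sum_antidiagonal_eq_sum_range_succ (fun j k => coeff j u * coeff k w)]
    rw [hi, Finset.sum_range_succ, Nat.sub_self, add_sub_cancel_right]
    exact sum_mem fun j hj => mul_mem (ih j (Finset.mem_range.1 hj)) (hw _)

end LambdaSeries

def IsAdmissible (a r : Khat) : Prop :=
  (∃ g : PowerSeries ℂ, ev0 r = HahnSeries.ofPowerSeries ℤ ℂ g ∧ IsUnit g) ∧
    MemOhat (PowerSeries.C (R := K) zK * (a + PowerSeries.X * (r⁻¹ * pD r))) ∧
    resHat (a + PowerSeries.X * (r⁻¹ * pD r)) = negHalfLam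

namespace IsAdmissible

variable {a r r' : Khat}

lemma constantCoeff_ne_zero (h : IsAdmissible a r) : constantCoeff r ≠ 0 := by
  obtain ⟨⟨g, hg, hgu⟩, -⟩ := h
  exact hg ▸ (map_ne_zero_iff _ HahnSeries.ofPowerSeries_injective).2 hgu.ne_zero

lemma memOhat_mul_inv (hr : IsAdmissible a r) (hr' : IsAdmissible a r') :
    MemOhat (r' * r⁻¹) := by
  have hX : X * (r'⁻¹ * pD r' - r⁻¹ * pD r) =
      (a + X * (r'⁻¹ * pD r')) - (a + X * (r⁻¹ * pD r)) := by ring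
  refine memOhat_of_pD_eq_mul (memOhat_of_X_mul ?_ ?_)
    (pD_mul_inv hr.constantCoeff_ne_zero hr'.constantCoeff_ne_zero)
  · rw [hX, mul_sub]
    exact hr'.2.1.sub hr.2.1
  · rw [hX, resHat_sub, hr'.2.2, hr.2.2, sub_self]

lemma resHat_eq (h : IsAdmissible a r) : resHat a = negHalfLam := by
  obtain ⟨⟨g, hg, hgu⟩, -, hres⟩ := h
  rwa [resHat_add, resHat_X_mul, resHat_inv_mul_pD_eq_zero hg hgu, mul_zero, add_zero] at hres

lemma zK_mul_coeff_one_mem (h : IsAdmissible a r) : zK * coeff 1 a ∈ Oz := by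
  obtain ⟨⟨g, hg : constantCoeff r = _, hgu⟩, hm, -⟩ := h
  have h1 := hm 1
  rw [coeff_C_mul, map_add, show (1 : ℕ) = 0 + 1 from rfl, coeff_succ_X_mul,
    coeff_zero_eq_constantCoeff_apply, constantCoeff_inv_mul_pD] at h1
  have h2 := mul_mem zK_mem_Oz (hg ▸ inv_mul_lD_ofPowerSeries_mem_Oz hgu)
  simpa only [mul_add, add_sub_cancel_right] using sub_mem h1 h2

end IsAdmissible

lemma exists_isAdmissible {a : Khat} (ha0 : ev0 a ∈ Oz) (ha1 : zK * coeff 1 a ∈ Oz)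
    (hres : resHat a = negHalfLam) : ∃ r, IsAdmissible a r := by
  set T : Khat := -PowerSeries.mk fun i => polarPrimitive (coeff (i + 1) a)
  have hT : constantCoeff T = 0 := by
    rw [map_neg, ← coeff_zero_eq_constantCoeff_apply, coeff_mk, polarPrimitive_eq_zero ha1,
      neg_zero]
  obtain ⟨r, hr1, hpd⟩ := lDer.exists_mapPowerSeries_eq_mul hT
  have hlog : r⁻¹ * pD r = pD T := by
    rw [pD_eq_mapPowerSeries r, hpd, ← mul_assoc, PowerSeries.inv_mul_cancel r (by simp [hr1]),
      one_mul, pD_eq_mapPowerSeries]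
  refine ⟨r, ⟨1, by simp [ev0, hr1], isUnit_one⟩, ?_, ?_⟩ <;> rw [hlog]
  · rintro (_ | i)
    · simpa [coeff_zero_eq_constantCoeff] using
        (mul_mem zK_mem_Oz ha0 : zK * constantCoeff a ∈ Oz)
    · rw [coeff_C_mul, map_add, coeff_succ_X_mul, coeff_pD, map_neg, coeff_mk, ← lDer_apply,
        map_neg, lDer_apply, ← sub_eq_add_neg]
      exact zK_mul_sub_lD_polarPrimitive_mem _
  · rw [resHat_add, resHat_X_mul, resHat_pD, mul_zero, add_zero, hres]

/-- Description of the set `Y` of admissible gauge factors `r` for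
`a ∈ ℂ((z))[[λ]]` with `a(z,0) ∈ ℂ[[z]]`: (1) any two elements of `Y` differ by a unit of
`ℂ[[z,λ]]`; (2) `Y ≠ ∅` iff `z·a₁ ∈ ℂ[[z]]` and `res a = -λ/2`. -/
theorem stmt10 (a : Khat) (ha0 : ev0 a ∈ Oz)
    (Y : Set Khat)
    (hY : ∀ r : Khat, r ∈ Y ↔
      ((∃ g : PowerSeries ℂ, ev0 r = HahnSeries.ofPowerSeries ℤ ℂ g ∧ IsUnit g) ∧
        MemOhat (PowerSeries.C (R := K) zK * (a + PowerSeries.X * (r⁻¹ * pD r))) ∧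
        resHat (a + PowerSeries.X * (r⁻¹ * pD r)) = negHalfLam)) :
    (∀ r ∈ Y, ∀ r' ∈ Y, ∃ u : Khat, MemOhat u ∧ (∃ v : Khat, MemOhat v ∧ u * v = 1) ∧
        r' = u * r) ∧
    (Y.Nonempty ↔ (zK * PowerSeries.coeff (R := K) 1 a ∈ Oz ∧ resHat a = negHalfLam)) := by
  have hY' : ∀ r, r ∈ Y ↔ IsAdmissible a r := hY
  refine ⟨fun r hr r' hr' => ?_, ⟨fun ⟨r, hr⟩ => ?_, fun ⟨h1, h2⟩ => ?_⟩⟩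
  · rw [hY'] at hr hr'
    have h := PowerSeries.mul_inv_cancel r hr.constantCoeff_ne_zero
    have h' := PowerSeries.mul_inv_cancel r' hr'.constantCoeff_ne_zero
    refine ⟨r' * r⁻¹, hr.memOhat_mul_inv hr', ⟨r * r'⁻¹, hr'.memOhat_mul_inv hr, ?_⟩,
      ?_⟩
    · linear_combination (r' * r'⁻¹) * h + h'
    · linear_combination (-r') * h
  · rw [hY'] at hr
    exact ⟨hr.zK_mul_coeff_one_mem, hr.resHat_eq⟩
  · obtain ⟨r, hr⟩ := exists_isAdmissible ha0 h1 h2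
    exact ⟨r, (hY' r).2 hr⟩

end
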